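/- Every tuple of nonnegative integers (s₁,…,sₖ) is obtained from [0] by multiplication and the Rota-Baxter operator I via the formula (s₁,…,sₖ) = I^{s₁}([0] ш* I^{s₂}([0] ш* I^{s₃}(⋯ I^{sₖ}([0])⋯))). Hence ℌ≥0 is generated by [0] as a nonunitary Rota-Baxter algebra. -/

import Mathlib

/-- Word-level shuffle product on words over `Bool` (`x₀ = false`, `x₁ = true`). -/
noncomputable def shq : List Bool → List Bool → (List Bool →₀ ℚ)
  | [], l => Finsupp.single l 1
  | a :: as, [] => Finsupp.single (a :: as) 1
  | a :: as, b :: bs =>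
      Finsupp.mapDomain (a :: ·) (shq as (b :: bs))
      + Finsupp.mapDomain (b :: ·) (shq (a :: as) bs)
  termination_by x y => x.length + y.length

/-- `[s₁,…,sₖ] ↦ x₀^{s₁−1}x₁⋯x₀^{sₖ−1}x₁`. -/
def wordOf' (s : List ℕ) : List Bool :=
  (s.map fun n => List.replicate (n - 1) false ++ [true]).flatten

/-- A word ending in `x₁` gives a tuple of positive integers. -/
def toTuple : List Bool → List ℕ
  | [] => []
  | false :: w =>
      match toTuple w with
      | [] => []
      | s :: t => (s + 1) :: t
  | true :: w => 1 :: toTuple w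

/-- `I` adds 1 to the first entry of a tuple. -/
def incFirst : List ℕ → List ℕ
  | [] => []
  | a :: t => (a + 1) :: t

/-- Basis vector of `ℌ≥0` corresponding to a tuple. -/
noncomputable def E (s : List ℕ) : List ℕ →₀ ℚ := Finsupp.single s 1

/-- The characterization of the product `ш*` on `ℌ≥0`: commutative associative
extension of the `ℌ≥1` shuffle with `[0] ш* [s⃗] = [0,s⃗]` and the shift `I` a
Rota-Baxter operator of weight 0. -/
def GoodMul (mul : (List ℕ →₀ ℚ) →ₗ[ℚ] (List ℕ →₀ ℚ) →ₗ[ℚ] (List ℕ →₀ ℚ)) : Prop :=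
  (∀ s t : List ℕ, s ≠ [] → t ≠ [] → (∀ x ∈ s, 1 ≤ x) → (∀ x ∈ t, 1 ≤ x) →
      mul (E s) (E t) = Finsupp.mapDomain toTuple (shq (wordOf' s) (wordOf' t))) ∧
  (∀ s t : List ℕ, s ≠ [] → t ≠ [] → mul (E s) (E t) = mul (E t) (E s)) ∧
  (∀ s t u : List ℕ, s ≠ [] → t ≠ [] → u ≠ [] →
      mul (mul (E s) (E t)) (E u) = mul (E s) (mul (E t) (E u))) ∧
  (∀ s : List ℕ, s ≠ [] → mul (E [0]) (E s) = E (0 :: s)) ∧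
  (∀ s t : List ℕ, s ≠ [] → t ≠ [] →
      mul (Finsupp.mapDomain incFirst (E s)) (Finsupp.mapDomain incFirst (E t)) =
        Finsupp.mapDomain incFirst (mul (E s) (Finsupp.mapDomain incFirst (E t))) +
        Finsupp.mapDomain incFirst (mul (Finsupp.mapDomain incFirst (E s)) (E t)))

/-- `build mul (s₁,…,sₖ) = I^{s₁}([0] ш* I^{s₂}([0] ш* ⋯ I^{sₖ}([0])⋯))`. -/
noncomputable def build
    (mul : (List ℕ →₀ ℚ) →ₗ[ℚ] (List ℕ →₀ ℚ) →ₗ[ℚ] (List ℕ →₀ ℚ)) :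
    List ℕ → (List ℕ →₀ ℚ)
  | [] => 0
  | [s] => (fun f => Finsupp.mapDomain incFirst f)^[s] (E [0])
  | s :: rest =>
      (fun f => Finsupp.mapDomain incFirst f)^[s] (mul (E [0]) (build mul rest))

/-! Since `[0] ш* [s⃗] = [0, s⃗]` and `I^n` raises the first entry by `n`, the right-hand side
`I^{s₁}([0] ш* ⋯)` unwinds, from the inside out, to `[s₁, …, sₖ]`. -/

lemma mapDomain_incFirst_E (s : List ℕ) :
    Finsupp.mapDomain incFirst (E s) = E (incFirst s) :=
  Finsupp.mapDomain_single

lemma incFirst_iterate_cons (n a : ℕ) (t : List ℕ) :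
    incFirst^[n] (a :: t) = (a + n) :: t := by
  induction n with
  | zero => rfl
  | succ n ih => rw [Function.iterate_succ_apply', ih]; rfl

lemma mapDomain_incFirst_iterate_E_cons (n a : ℕ) (t : List ℕ) :
    (fun f => Finsupp.mapDomain incFirst f)^[n] (E (a :: t)) = E ((a + n) :: t) := by
  rw [← incFirst_iterate_cons]
  induction n with
  | zero => rfl
  | succ n ih => rw [Function.iterate_succ_apply', Function.iterate_succ_apply', ih,
      mapDomain_incFirst_E]

lemma build_eq_E {mul : (List ℕ →₀ ℚ) →ₗ[ℚ] (List ℕ →₀ ℚ) →ₗ[ℚ] (List ℕ →₀ ℚ)}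
    (hzero : ∀ s : List ℕ, s ≠ [] → mul (E [0]) (E s) = E (0 :: s)) :
    ∀ l : List ℕ, l ≠ [] → build mul l = E l
  | [], h => absurd rfl h
  | [a], _ => by rw [build, mapDomain_incFirst_iterate_E_cons, Nat.zero_add]
  | a :: b :: t, _ => by
    rw [build.eq_3 mul a _ (List.cons_ne_nil b t), build_eq_E hzero _ (List.cons_ne_nil b t),
      hzero _ (List.cons_ne_nil b t), mapDomain_incFirst_iterate_E_cons, Nat.zero_add]

lemma build_mem (mul : (List ℕ →₀ ℚ) →ₗ[ℚ] (List ℕ →₀ ℚ) →ₗ[ℚ] (List ℕ →₀ ℚ))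
    {S : Submodule ℚ (List ℕ →₀ ℚ)} (hzero : E [0] ∈ S)
    (hmul : ∀ f g : List ℕ →₀ ℚ, f ∈ S → g ∈ S → mul f g ∈ S)
    (hinc : Set.MapsTo (Finsupp.mapDomain incFirst) (S : Set (List ℕ →₀ ℚ)) S) :
    ∀ l : List ℕ, build mul l ∈ S
  | [] => S.zero_mem
  | [a] => hinc.iterate a hzero
  | a :: b :: t => hinc.iterate a (hmul _ _ hzero (build_mem mul hzero hmul hinc (b :: t)))

/-- Every nonempty tuple of nonnegative integers is obtained from `[0]` by
multiplication and the Rota-Baxter operator `I` via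
`(s₁,…,sₖ) = I^{s₁}([0] ш* I^{s₂}([0] ш* ⋯ I^{sₖ}([0])⋯))`; hence `ℌ≥0` is
generated by `[0]` as a nonunitary Rota-Baxter algebra. -/
theorem H0_generated_by_zero
    (mul : (List ℕ →₀ ℚ) →ₗ[ℚ] (List ℕ →₀ ℚ) →ₗ[ℚ] (List ℕ →₀ ℚ))
    (hmul : GoodMul mul) :
    (∀ l : List ℕ, l ≠ [] → build mul l = E l) ∧
    (∀ S : Submodule ℚ (List ℕ →₀ ℚ), E [0] ∈ S →
      (∀ f g : List ℕ →₀ ℚ, f ∈ S → g ∈ S → mul f g ∈ S) →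
      (∀ f : List ℕ →₀ ℚ, f ∈ S → Finsupp.mapDomain incFirst f ∈ S) →
      ∀ l : List ℕ, l ≠ [] → E l ∈ S) := by
  have hbuild := build_eq_E hmul.2.2.2.1
  refine ⟨hbuild, fun S hzero hmulS hinc l hl => ?_⟩
  rw [← hbuild l hl]
  exact build_mem mul hzero hmulS hinc l
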